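/- arXiv:2501.10206 — 3 statements merged into one kernel-verified Lean document; each statement's English description precedes it below -/
import Mathlib

section
/- (Eckart–Young–Mirsky, Frobenius norm) Let A ∈ ℝ^{m×n} with m ≤ n have singular values σ_1 ≥ … ≥ σ_m. Then for every r < m, min over matrices B of rank at most r of ‖A − B‖_F equals √(σ_{r+1}² + … + σ_m²), and the minimum is attained by the truncated SVD A_r = U_r Σ_r V_rᵀ. -/
open Matrix

/-- The Frobenius norm of a real matrix. -/
noncomputable def frobNorm {m n : ℕ} (A : Matrix (Fin m) (Fin n) ℝ) : ℝ :=
  Real.sqrt (∑ i, ∑ j, (A i j) ^ 2)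

-- piece 1: frobenius as trace
lemma frob2_eq_trace {m n : ℕ} (X : Matrix (Fin m) (Fin n) ℝ) :
    ∑ i, ∑ j, X i j ^ 2 = (Xᵀ * X).trace := by
  rw [Finset.sum_comm]
  simp [Matrix.trace, Matrix.diag, Matrix.mul_apply, sq]

-- piece 2: E has orthonormal rows
lemma E_mul_Et {m n : ℕ} (hmn : m ≤ n) :
    (Matrix.of fun (i : Fin m) (j : Fin n) => if (i : ℕ) = (j : ℕ) then (1:ℝ) else 0) *
    (Matrix.of fun (i : Fin m) (j : Fin n) => if (i : ℕ) = (j : ℕ) then (1:ℝ) else 0)ᵀ = 1 := by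
  ext i k
  rw [Matrix.mul_apply, Finset.sum_eq_single (Fin.castLE hmn i)]
  · simp [Matrix.one_apply, Fin.ext_iff, eq_comm]
  · intro j _ hj
    have : (i : ℕ) ≠ (j : ℕ) := fun h => hj (by simp [Fin.ext_iff, ← h])
    simp [this]
  · simp

-- piece 3: counting
lemma sum_indicator_lt {m r : ℕ} (hr : r ≤ m) :
    ∑ i : Fin m, (if (i : ℕ) < r then (1:ℝ) else 0) = r := by
  rw [Fin.sum_univ_eq_sum_range (fun i => if i < r then (1:ℝ) else 0)]
  rw [Finset.sum_ite, Finset.sum_const, Finset.sum_const]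
  have : (Finset.range m).filter (· < r) = Finset.range r := by
    ext x; simp; omega
  simp [this]

-- piece 4: combinatorial lemma
lemma comb {m r : ℕ} (hr : r < m) (σ : Fin m → ℝ) (hσ : Antitone σ) (hσ0 : ∀ i, 0 ≤ σ i)
    (c : Fin m → ℝ) (hc0 : ∀ i, 0 ≤ c i) (hc1 : ∀ i, c i ≤ 1) (hcs : ∑ i, c i ≤ r) :
    ∑ i, σ i ^ 2 * c i ≤ ∑ i : Fin m, (if (i : ℕ) < r then σ i ^ 2 else 0) := by
  set ρ : ℝ := σ ⟨r, hr⟩ with hρ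
  have key : ∀ i : Fin m, σ i ^ 2 * c i ≤
      (if (i : ℕ) < r then σ i ^ 2 else 0) + ρ ^ 2 * (c i - if (i : ℕ) < r then 1 else 0) := by
    intro i
    by_cases hi : (i : ℕ) < r
    · have h1 : σ ⟨r, hr⟩ ≤ σ i := hσ (by simp [Fin.le_def]; omega)
      have h2 : ρ ^ 2 ≤ σ i ^ 2 := by
        have := hσ0 i; have := hσ0 ⟨r, hr⟩; nlinarith
      simp only [hi, if_pos]
      nlinarith [hc1 i]
    · have h1 : σ i ≤ σ ⟨r, hr⟩ := hσ (by simp [Fin.le_def]; omega)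
      have h2 : σ i ^ 2 ≤ ρ ^ 2 := by
        have := hσ0 i; nlinarith
      simp only [hi, if_neg, not_false_iff]
      nlinarith [hc0 i]
  calc ∑ i, σ i ^ 2 * c i
      ≤ ∑ i : Fin m, ((if (i : ℕ) < r then σ i ^ 2 else 0)
          + ρ ^ 2 * (c i - if (i : ℕ) < r then 1 else 0)) := Finset.sum_le_sum fun i _ => key i
    _ = (∑ i : Fin m, (if (i : ℕ) < r then σ i ^ 2 else 0))
          + ρ ^ 2 * ((∑ i, c i) - ∑ i : Fin m, (if (i : ℕ) < r then (1:ℝ) else 0)) := by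
        rw [Finset.sum_add_distrib, ← Finset.mul_sum, Finset.sum_sub_distrib]
    _ ≤ ∑ i : Fin m, (if (i : ℕ) < r then σ i ^ 2 else 0) := by
        rw [sum_indicator_lt hr.le]
        nlinarith [sq_nonneg ρ, hcs]

lemma exists_proj_factor {m n r : ℕ} (B : Matrix (Fin m) (Fin n) ℝ) (hB : B.rank ≤ r) :
    ∃ (s : ℕ) (Q : Matrix (Fin m) (Fin s) ℝ) (C : Matrix (Fin s) (Fin n) ℝ),
      s ≤ r ∧ Qᵀ * Q = 1 ∧ B = Q * C := by
  classical
  set e : EuclideanSpace ℝ (Fin m) ≃ₗ[ℝ] (Fin m → ℝ) :=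
    WithLp.linearEquiv 2 ℝ (Fin m → ℝ) with he
  set g : Fin n → EuclideanSpace ℝ (Fin m) := fun j => e.symm (Bᵀ j) with hg
  set S : Submodule ℝ (EuclideanSpace ℝ (Fin m)) := Submodule.span ℝ (Set.range g) with hS
  have hmap : S = (Submodule.span ℝ (Set.range Bᵀ)).map (e.symm : (Fin m → ℝ) →ₗ[ℝ] _) := by
    rw [Submodule.map_span, hS]
    congr 1
    ext x
    simp [hg, Matrix.transpose_apply]
    exact ⟨fun ⟨y, h⟩ => ⟨_, ⟨y, rfl⟩, h⟩, fun ⟨_, ⟨y, rfl⟩, h⟩ => ⟨y, h⟩⟩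
  have hfin : Module.finrank ℝ S = B.rank := by
    rw [hmap, LinearEquiv.finrank_map_eq, Matrix.rank_eq_finrank_span_cols]
    rfl
  set s := Module.finrank ℝ S with hs
  have hsr : s ≤ r := by rw [hfin]; exact hB
  set q := stdOrthonormalBasis ℝ S with hq
  set Q : Matrix (Fin m) (Fin s) ℝ := Matrix.of fun i k => e ((q k : EuclideanSpace ℝ (Fin m))) i
    with hQ
  have hgS : ∀ j, g j ∈ S := fun j => Submodule.subset_span (Set.mem_range_self j)
  set C : Matrix (Fin s) (Fin n) ℝ := Matrix.of fun k j => q.repr ⟨g j, hgS j⟩ k with hC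
  refine ⟨s, Q, C, hsr, ?_, ?_⟩
  · ext k l
    have horth := orthonormal_iff_ite.mp q.orthonormal k l
    rw [Submodule.coe_inner] at horth
    have hinner : (inner ℝ ((q k : EuclideanSpace ℝ (Fin m))) ((q l : EuclideanSpace ℝ (Fin m))) : ℝ)
        = ∑ i, e ((q k : EuclideanSpace ℝ (Fin m))) i * e ((q l : EuclideanSpace ℝ (Fin m))) i := by
      rw [PiLp.inner_apply]
      simp only [RCLike.inner_apply', conj_trivial]
      rfl
    rw [Matrix.mul_apply]
    simp only [Matrix.transpose_apply, hQ, Matrix.of_apply]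
    rw [← hinner, horth]
    simp [Matrix.one_apply]
  · ext i j
    have hrepr := q.sum_repr ⟨g j, hgS j⟩
    have this : (e (g j)) i = ∑ k, (q.repr ⟨g j, hgS j⟩ k) * e ((q k : EuclideanSpace ℝ (Fin m))) i := by
      have h2 : e ((↑(∑ k, q.repr ⟨g j, hgS j⟩ k • q k) : EuclideanSpace ℝ (Fin m))) i
          = e (g j) i := by rw [hrepr]
      rw [← h2, Submodule.coe_sum, map_sum, Finset.sum_apply]
      apply Finset.sum_congr rfl
      intro k _
      rw [Submodule.coe_smul, _root_.map_smul]
      rfl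
    have hgj : e (g j) = Bᵀ j := by rw [hg]; simp
    rw [Matrix.mul_apply]
    have := this
    rw [hgj] at this
    have hBij : B i j = (Bᵀ j) i := rfl
    rw [hBij, this]
    apply Finset.sum_congr rfl
    intro k _
    show _ = Q i k * C k j
    simp only [hQ, hC, Matrix.of_apply]
    ring

-- trace helper: trace (Eᵀ * M * E) = trace M when E * Eᵀ = 1
lemma trace_conj_E {m n : ℕ} {E : Matrix (Fin m) (Fin n) ℝ} (hEE : E * Eᵀ = 1)
    (M : Matrix (Fin m) (Fin m) ℝ) : (Eᵀ * M * E).trace = M.trace := by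
  rw [Matrix.mul_assoc, Matrix.trace_mul_comm, Matrix.mul_assoc, hEE, Matrix.mul_one]

-- trace of diag * M * diag
lemma trace_diag_conj {m : ℕ} (σ : Fin m → ℝ) (M : Matrix (Fin m) (Fin m) ℝ) :
    (Matrix.diagonal σ * M * Matrix.diagonal σ).trace = ∑ i, σ i ^ 2 * M i i := by
  simp only [Matrix.trace, Matrix.diag]
  apply Finset.sum_congr rfl
  intro i _
  rw [Matrix.mul_assoc, Matrix.diagonal_mul, Matrix.mul_diagonal]
  ring

-- key inequality
lemma key_ineq {m n r : ℕ} {E : Matrix (Fin m) (Fin n) ℝ} (hEE : E * Eᵀ = 1)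
    (σ : Fin m → ℝ) (hσ : Antitone σ) (hσ0 : ∀ i, 0 ≤ σ i) (hr : r < m)
    (B : Matrix (Fin m) (Fin n) ℝ) (hB : B.rank ≤ r) :
    ∑ i : Fin m, (if r ≤ (i : ℕ) then σ i ^ 2 else 0) ≤
      ∑ i, ∑ j, ((Matrix.diagonal σ * E - B) i j) ^ 2 := by
  obtain ⟨s, Q, C, hsr, hQQ, hBQC⟩ := exists_proj_factor B hB
  set D := Matrix.diagonal σ * E with hD
  set P := Q * Qᵀ with hP
  have hPB : P * B = B := by
    rw [hBQC, hP, Matrix.mul_assoc, ← Matrix.mul_assoc Qᵀ Q C, hQQ, Matrix.one_mul]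
  have hPt : Pᵀ = P := by rw [hP, Matrix.transpose_mul, Matrix.transpose_transpose]
  have hP2 : P * P = P := by
    rw [hP, Matrix.mul_assoc, ← Matrix.mul_assoc Qᵀ Q Qᵀ, hQQ, Matrix.one_mul]
  -- diagonal entries of P
  have hc0 : ∀ i, 0 ≤ P i i := by
    intro i
    rw [hP, Matrix.mul_apply]
    exact Finset.sum_nonneg fun k _ => by rw [Matrix.transpose_apply]; exact mul_self_nonneg _
  have hc1 : ∀ i, P i i ≤ 1 := by
    intro i
    have h1 : (P * P) i i = P i i := by rw [hP2]
    have h2 : ∑ k, P i k ^ 2 = P i i := by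
      rw [← h1, Matrix.mul_apply]
      apply Finset.sum_congr rfl
      intro k _
      have : P k i = P i k := by conv_lhs => rw [← hPt, Matrix.transpose_apply]
      rw [this]; ring
    have h3 : P i i ^ 2 ≤ ∑ k, P i k ^ 2 :=
      Finset.single_le_sum (fun k _ => sq_nonneg (P i k)) (Finset.mem_univ i)
    nlinarith [hc0 i]
  have hcs : ∑ i, P i i ≤ (r : ℝ) := by
    have : P.trace = (s : ℝ) := by
      rw [hP, Matrix.trace_mul_comm, hQQ, Matrix.trace_one]
      simp
    have h4 : ∑ i, P i i = (s : ℝ) := this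
    rw [h4]
    exact_mod_cast hsr
  set X := D - B with hX
  -- splitting
  have e1 : (1 - P)ᵀ * (1 - P) = 1 - P := by
    rw [Matrix.transpose_sub, Matrix.transpose_one, hPt, Matrix.mul_sub, Matrix.mul_one,
      Matrix.sub_mul, Matrix.one_mul, hP2]
    simp
  have hsplit : Xᵀ * X = (Qᵀ * X)ᵀ * (Qᵀ * X) + ((1 - P) * X)ᵀ * ((1 - P) * X) := by
    rw [Matrix.transpose_mul, Matrix.transpose_transpose, Matrix.transpose_mul,
      Matrix.mul_assoc, Matrix.mul_assoc, ← Matrix.mul_assoc Q Qᵀ X, ← hP,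
      ← Matrix.mul_assoc (1 - P)ᵀ (1 - P) X, e1, ← Matrix.mul_add, Matrix.sub_mul,
      Matrix.one_mul, add_sub_cancel]
  have hPX : (1 - P) * X = (1 - P) * D := by
    have hz : (1 - P) * B = 0 := by rw [Matrix.sub_mul, Matrix.one_mul, hPB, sub_self]
    calc (1 - P) * X = (1 - P) * D - (1 - P) * B := by rw [hX, Matrix.mul_sub]
      _ = (1 - P) * D := by rw [hz, sub_zero]
  have htrD : ((1 - P) * D)ᵀ * ((1 - P) * D) = Dᵀ * ((1 - P) * D) := by
    rw [Matrix.transpose_mul, Matrix.mul_assoc, ← Matrix.mul_assoc (1-P)ᵀ (1-P) D, e1]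
  -- trace computations
  have htr1 : (Dᵀ * D).trace = ∑ i, σ i ^ 2 := by
    rw [hD, Matrix.transpose_mul, Matrix.mul_assoc, ← Matrix.mul_assoc (Matrix.diagonal σ)ᵀ _ E,
      ← Matrix.mul_assoc Eᵀ _ E, trace_conj_E hEE, Matrix.diagonal_transpose,
      Matrix.diagonal_mul_diagonal, Matrix.trace_diagonal]
    exact Finset.sum_congr rfl fun i _ => (sq (σ i)).symm
  have htr2 : (Dᵀ * (P * D)).trace = ∑ i, σ i ^ 2 * P i i := by
    have : Dᵀ * (P * D) = Eᵀ * (Matrix.diagonal σ * P * Matrix.diagonal σ) * E := by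
      rw [hD, Matrix.transpose_mul, Matrix.diagonal_transpose]
      rw [Matrix.mul_assoc Eᵀ _ _, Matrix.mul_assoc Eᵀ _ _, Matrix.mul_assoc (Matrix.diagonal σ) P _,
        Matrix.mul_assoc (Matrix.diagonal σ) _ _, Matrix.mul_assoc P _ _]
    rw [this, trace_conj_E hEE, trace_diag_conj]
  -- assembling
  have hmain : ∑ i, ∑ j, X i j ^ 2
      = (∑ i, ∑ j, (Qᵀ * X) i j ^ 2) + ((∑ i, σ i ^ 2) - ∑ i, σ i ^ 2 * P i i) := by
    rw [frob2_eq_trace X, hsplit, Matrix.trace_add, ← frob2_eq_trace (Qᵀ * X)]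
    congr 1
    rw [hPX, htrD]
    have hsub : (1 - P) * D = D - P * D := by rw [Matrix.sub_mul, Matrix.one_mul]
    rw [hsub, Matrix.mul_sub, Matrix.trace_sub, htr2, htr1]
  have hQX : 0 ≤ ∑ i, ∑ j, (Qᵀ * X) i j ^ 2 :=
    Finset.sum_nonneg fun i _ => Finset.sum_nonneg fun j _ => sq_nonneg _
  have hcomb := comb hr σ hσ hσ0 (fun i => P i i) hc0 hc1 hcs
  have hcomb' : ∑ i, σ i ^ 2 * P i i ≤ ∑ i : Fin m, (if (i : ℕ) < r then σ i ^ 2 else 0) := hcomb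
  have hσsplit : ∑ i, σ i ^ 2
      = (∑ i : Fin m, (if (i : ℕ) < r then σ i ^ 2 else 0))
        + ∑ i : Fin m, (if r ≤ (i : ℕ) then σ i ^ 2 else 0) := by
    rw [← Finset.sum_add_distrib]
    apply Finset.sum_congr rfl
    intro i _
    by_cases hi : (i : ℕ) < r
    · have : ¬ r ≤ (i : ℕ) := by omega
      simp [hi, this]
    · have : r ≤ (i : ℕ) := by omega
      simp [hi, this]
  have hXgoal : ∑ i, ∑ j, ((Matrix.diagonal σ * E - B) i j) ^ 2 = ∑ i, ∑ j, X i j ^ 2 := by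
    rw [hX, hD]
  rw [hXgoal, hmain]
  linarith

-- orthogonal invariance of the Frobenius quadratic form
lemma frob2_conj {m n : ℕ} {U : Matrix (Fin m) (Fin m) ℝ} {V : Matrix (Fin n) (Fin n) ℝ}
    (hU₂ : Uᵀ * U = 1) (hV₂ : Vᵀ * V = 1) (M : Matrix (Fin m) (Fin n) ℝ) :
    ∑ i, ∑ j, ((U * M * Vᵀ) i j) ^ 2 = ∑ i, ∑ j, (M i j) ^ 2 := by
  rw [frob2_eq_trace, frob2_eq_trace]
  have h1 : (U * M * Vᵀ)ᵀ * (U * M * Vᵀ) = V * (Mᵀ * (Uᵀ * (U * (M * Vᵀ)))) := by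
    simp [Matrix.transpose_mul, Matrix.mul_assoc]
  rw [h1, ← Matrix.mul_assoc Uᵀ U (M * Vᵀ), hU₂, Matrix.one_mul, Matrix.trace_mul_comm]
  have h2 : Mᵀ * (M * Vᵀ) * V = Mᵀ * M * (Vᵀ * V) := by simp [Matrix.mul_assoc]
  rw [h2, hV₂, Matrix.mul_one]

-- Frobenius of diagonal * E
lemma frob2_diagE {m n : ℕ} {E : Matrix (Fin m) (Fin n) ℝ} (hEE : E * Eᵀ = 1)
    (d : Fin m → ℝ) :
    ∑ i, ∑ j, ((Matrix.diagonal d * E) i j) ^ 2 = ∑ i, d i ^ 2 := by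
  rw [frob2_eq_trace]
  have h1 : (Matrix.diagonal d * E)ᵀ * (Matrix.diagonal d * E)
      = Eᵀ * (Matrix.diagonal d * Matrix.diagonal d) * E := by
    rw [Matrix.transpose_mul, Matrix.diagonal_transpose]
    simp only [Matrix.mul_assoc]
  rw [h1, trace_conj_E hEE, Matrix.diagonal_mul_diagonal, Matrix.trace_diagonal]
  exact Finset.sum_congr rfl fun i _ => (sq (d i)).symm

-- rank of the truncated diagonal matrix
lemma rank_trunc {m n r : ℕ} (σ : Fin m → ℝ) :
    (Matrix.of fun (i : Fin m) (j : Fin n) =>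
      if (i : ℕ) = (j : ℕ) ∧ (i : ℕ) < r then σ i else 0).rank ≤ r := by
  classical
  set Q₀ : Matrix (Fin m) (Fin r) ℝ :=
    Matrix.of fun i k => if (i : ℕ) = (k : ℕ) then σ i else 0 with hQ₀
  set C₀ : Matrix (Fin r) (Fin n) ℝ :=
    Matrix.of fun k j => if (k : ℕ) = (j : ℕ) then (1:ℝ) else 0 with hC₀
  have hfact : (Matrix.of fun (i : Fin m) (j : Fin n) =>
      if (i : ℕ) = (j : ℕ) ∧ (i : ℕ) < r then σ i else 0) = Q₀ * C₀ := by
    ext i j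
    rw [Matrix.mul_apply]
    by_cases hi : (i : ℕ) < r
    · rw [Finset.sum_eq_single (⟨(i : ℕ), hi⟩ : Fin r)]
      · by_cases hij : (i : ℕ) = (j : ℕ)
        · have hj : (j : ℕ) < r := by omega
          simp [hQ₀, hC₀, hij, hi, hj]
        · simp [hQ₀, hC₀, hij, hi]
      · intro k _ hk
        have : (i : ℕ) ≠ (k : ℕ) := fun h => hk (by simp [Fin.ext_iff, ← h])
        simp [hQ₀, this]
      · simp
    · have hrhs : ∀ k : Fin r, Q₀ i k * C₀ k j = 0 := by
        intro k
        have : (i : ℕ) ≠ (k : ℕ) := by have := k.isLt; omega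
        simp [hQ₀, this]
      simp [hrhs, hi]
  rw [hfact]
  calc (Q₀ * C₀).rank ≤ Q₀.rank := Matrix.rank_mul_le_left Q₀ C₀
    _ ≤ Fintype.card (Fin r) := Matrix.rank_le_card_width Q₀
    _ = r := Fintype.card_fin r

/-- Eckart–Young–Mirsky theorem in the Frobenius norm: if `A = U Σ Vᵀ` is a singular value
decomposition of `A ∈ ℝ^{m×n}` (`m ≤ n`) with nonincreasing nonnegative singular values `σ`,
then for every `r < m` the truncated SVD `A_r = U Σ_r Vᵀ` has rank at most `r`, satisfies
`‖A − A_r‖_F = √(σ_{r+1}² + ⋯ + σ_m²)`, and minimizes `‖A − B‖_F` over all matrices `B`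
of rank at most `r`. -/
theorem eckart_young_mirsky
    (m n : ℕ) (hmn : m ≤ n)
    (A : Matrix (Fin m) (Fin n) ℝ)
    (U : Matrix (Fin m) (Fin m) ℝ) (V : Matrix (Fin n) (Fin n) ℝ)
    (hU₁ : U * Uᵀ = 1) (hU₂ : Uᵀ * U = 1)
    (hV₁ : V * Vᵀ = 1) (hV₂ : Vᵀ * V = 1)
    (σ : Fin m → ℝ) (hσ : Antitone σ) (hσ0 : ∀ i, 0 ≤ σ i)
    (hA : A = U * (Matrix.of fun (i : Fin m) (j : Fin n) =>
      if (i : ℕ) = (j : ℕ) then σ i else 0) * Vᵀ)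
    (r : ℕ) (hr : r < m) :
    (U * (Matrix.of fun (i : Fin m) (j : Fin n) =>
        if (i : ℕ) = (j : ℕ) ∧ (i : ℕ) < r then σ i else 0) * Vᵀ).rank ≤ r
    ∧ frobNorm (A - U * (Matrix.of fun (i : Fin m) (j : Fin n) =>
        if (i : ℕ) = (j : ℕ) ∧ (i : ℕ) < r then σ i else 0) * Vᵀ)
      = Real.sqrt (∑ i : Fin m, if r ≤ (i : ℕ) then σ i ^ 2 else 0)
    ∧ ∀ B : Matrix (Fin m) (Fin n) ℝ, B.rank ≤ r →
        Real.sqrt (∑ i : Fin m, if r ≤ (i : ℕ) then σ i ^ 2 else 0) ≤ frobNorm (A - B) := by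
  classical
  set E : Matrix (Fin m) (Fin n) ℝ :=
    Matrix.of fun i j => if (i : ℕ) = (j : ℕ) then (1:ℝ) else 0 with hE
  have hEE : E * Eᵀ = 1 := E_mul_Et hmn
  set D : Matrix (Fin m) (Fin n) ℝ :=
    Matrix.of fun i j => if (i : ℕ) = (j : ℕ) then σ i else 0 with hDdef
  set Dr : Matrix (Fin m) (Fin n) ℝ :=
    Matrix.of fun i j => if (i : ℕ) = (j : ℕ) ∧ (i : ℕ) < r then σ i else 0 with hDr
  set d : Fin m → ℝ := fun i => if r ≤ (i : ℕ) then σ i else 0 with hd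
  have hDE : D = Matrix.diagonal σ * E := by
    ext i j
    rw [Matrix.diagonal_mul]
    by_cases hij : (i : ℕ) = (j : ℕ) <;> simp [hDdef, hE, hij]
  have hDrE : D - Dr = Matrix.diagonal d * E := by
    ext i j
    rw [Matrix.sub_apply, Matrix.diagonal_mul]
    by_cases hij : (i : ℕ) = (j : ℕ)
    · by_cases hir : (i : ℕ) < r
      · have h1 : ¬ r ≤ (i : ℕ) := by omega
        have h2 : (j : ℕ) < r := by omega
        have h3 : ¬ r ≤ (j : ℕ) := by omega
        simp [hDdef, hDr, hd, hE, hij, hir, h1, h2, h3]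
      · have h1 : r ≤ (i : ℕ) := by omega
        have h2 : ¬ (j : ℕ) < r := by omega
        have h3 : r ≤ (j : ℕ) := by omega
        simp [hDdef, hDr, hd, hE, hij, hir, h1, h2, h3]
    · simp [hDdef, hDr, hd, hE, hij]
  have hd2 : ∑ i, d i ^ 2 = ∑ i : Fin m, (if r ≤ (i : ℕ) then σ i ^ 2 else 0) := by
    apply Finset.sum_congr rfl
    intro i _
    by_cases hi : r ≤ (i : ℕ) <;> simp [hd, hi]
  refine ⟨?_, ?_, ?_⟩
  · calc (U * Dr * Vᵀ).rank ≤ (U * Dr).rank := Matrix.rank_mul_le_left _ _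
      _ ≤ Dr.rank := Matrix.rank_mul_le_right _ _
      _ ≤ r := rank_trunc σ
  · have hdiff : A - U * Dr * Vᵀ = U * (Matrix.diagonal d * E) * Vᵀ := by
      rw [hA, ← hDrE, Matrix.mul_sub, Matrix.sub_mul]
    rw [hdiff, frobNorm, frob2_conj hU₂ hV₂, frob2_diagE hEE, hd2]
  · intro B hB
    have hrank : (Uᵀ * B * V).rank ≤ r := by
      calc (Uᵀ * B * V).rank ≤ (Uᵀ * B).rank := Matrix.rank_mul_le_left _ _
        _ ≤ B.rank := Matrix.rank_mul_le_right _ _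
        _ ≤ r := hB
    have hkey := key_ineq hEE σ hσ hσ0 hr (Uᵀ * B * V) hrank
    have hAB : A - B = U * (Matrix.diagonal σ * E - Uᵀ * B * V) * Vᵀ := by
      have hUBV : U * (Uᵀ * B * V) * Vᵀ = B := by
        calc U * (Uᵀ * B * V) * Vᵀ = (U * Uᵀ) * B * (V * Vᵀ) := by
              simp only [Matrix.mul_assoc]
          _ = B := by rw [hU₁, hV₁, Matrix.one_mul, Matrix.mul_one]
      rw [Matrix.mul_sub, Matrix.sub_mul, ← hDE, ← hA, hUBV]
    have hfrob : ∑ i, ∑ j, ((A - B) i j) ^ 2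
        = ∑ i, ∑ j, ((Matrix.diagonal σ * E - Uᵀ * B * V) i j) ^ 2 := by
      rw [hAB, frob2_conj hU₂ hV₂]
    rw [frobNorm]
    apply Real.sqrt_le_sqrt
    rw [hfrob]
    exact hkey
end

section
/- Define mrank K = (1/(2M))·Σ_{p=1}^P mem B_p, where mem B_p = min(m_p², 2 r_p m_p) for an m_p × m_p block of rank r_p. If all non-dense blocks satisfy r_p ≤ R and the mosaic structure has at most c·2^k blocks of size M/2^k at levels k = 1,…,L with L ≤ log₂ M, plus at most c·2^L dense blocks of size M/2^L, then mrank K ≤ C·R·log₂ M for a constant C depending only on c and k₀ = log₂ M − L. -/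
/-- Define `mrank K = (1/(2M)) ∑_p mem B_p`, where `mem B_p = min(m_p², 2 r_p m_p)` for an
`m_p × m_p` block of rank `r_p`.  If all non-dense blocks have rank at most `R`, the mosaic
structure has at most `c · 2^k` non-dense blocks of size `M/2^k` at each level `k = 1, …, L`,
and at most `c · 2^L` dense blocks of size `M/2^L`, where `M = 2^(L+k₀)`, then
`mrank K ≤ C · R · log₂ M` for a constant `C` depending only on `c` and `k₀`. -/
theorem mosaic_rank_bound
    (c : ℝ) (hc : 0 < c) (k₀ : ℕ) :
    ∃ C : ℝ, ∀ (M L R P : ℕ) (lvl r : ℕ → ℕ) (dns : ℕ → Bool),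
      M = 2 ^ (L + k₀) → 1 ≤ L → 1 ≤ R →
      (∀ p < P, 1 ≤ lvl p ∧ lvl p ≤ L) →
      (∀ p < P, dns p = true → lvl p = L) →
      (∀ p < P, dns p = false → r p ≤ R) →
      (∀ k, ((((Finset.range P).filter (fun p => lvl p = k ∧ dns p = false)).card : ℝ)
        ≤ c * 2 ^ k)) →
      ((((Finset.range P).filter (fun p => dns p = true)).card : ℝ) ≤ c * 2 ^ L) →
      (1 / (2 * (M : ℝ))) * ∑ p ∈ Finset.range P,
          (min (((M / 2 ^ lvl p : ℕ) : ℝ) ^ 2)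
            (2 * (r p : ℝ) * ((M / 2 ^ lvl p : ℕ) : ℝ)))
        ≤ C * R * Real.logb 2 M := by
  refine ⟨c + c * 2 ^ k₀, ?_⟩
  intro M L R P lvl r dns hM hL hR hlvl hdnsL hrR hcount hdense
  have hMr : (M : ℝ) = 2 ^ (L + k₀) := by rw [hM]; push_cast; ring
  have hApos : (0:ℝ) < 2 ^ (L + k₀) := by positivity
  have hlog : Real.logb 2 (M:ℝ) = (L + k₀ : ℕ) := by
    rw [hMr, Real.logb_pow]
    simp
  have hblk : ∀ p < P, ((M / 2 ^ lvl p : ℕ) : ℝ) = 2 ^ (L + k₀ - lvl p) := by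
    intro p hp
    have h1 : lvl p ≤ L + k₀ := le_trans (hlvl p hp).2 (Nat.le_add_right _ _)
    rw [hM, Nat.pow_div h1 (by norm_num)]
    push_cast; ring
  set g : ℕ → ℝ := fun p =>
    if dns p then (2:ℝ)^(2*k₀) else 2*(R:ℝ)*2^(L+k₀-lvl p) with hg
  have hfg : ∀ p ∈ Finset.range P, min (((M / 2 ^ lvl p : ℕ) : ℝ) ^ 2)
      (2 * (r p : ℝ) * ((M / 2 ^ lvl p : ℕ) : ℝ)) ≤ g p := by
    intro p hp
    rw [Finset.mem_range] at hp
    rw [hblk p hp, hg]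
    by_cases hd : dns p = true
    · simp only [hd, if_true]
      have hpl : lvl p = L := hdnsL p hp hd
      calc min (((2:ℝ) ^ (L + k₀ - lvl p)) ^ 2) _
          ≤ ((2:ℝ)^(L+k₀-lvl p))^2 := min_le_left _ _
        _ = 2^(2*k₀) := by
            rw [hpl]
            have h3 : L + k₀ - L = k₀ := by omega
            rw [h3, ← pow_mul, mul_comm]
    · simp only [hd, if_false]
      calc min _ (2*(r p:ℝ)*2^(L+k₀-lvl p))
          ≤ 2*(r p:ℝ)*2^(L+k₀-lvl p) := min_le_right _ _
        _ ≤ 2*(R:ℝ)*2^(L+k₀-lvl p) := by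
            have h2 : (r p : ℝ) ≤ R := by exact_mod_cast hrR p hp (by simpa using hd)
            gcongr
  have hsum1 : ∑ p ∈ Finset.range P, min (((M / 2 ^ lvl p : ℕ) : ℝ) ^ 2)
      (2 * (r p : ℝ) * ((M / 2 ^ lvl p : ℕ) : ℝ)) ≤ ∑ p ∈ Finset.range P, g p :=
    Finset.sum_le_sum hfg
  have hsplit : ∑ p ∈ Finset.range P, g p
      = (∑ _p ∈ (Finset.range P).filter (fun p => dns p = true), (2:ℝ)^(2*k₀))
      + ∑ p ∈ (Finset.range P).filter (fun p => ¬ dns p = true),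
          2*(R:ℝ)*2^(L+k₀-lvl p) := by
    rw [← Finset.sum_filter_add_sum_filter_not (Finset.range P) (fun p => dns p = true)]
    congr 1
    · exact Finset.sum_congr rfl (fun p hp => by
        simp [hg, (Finset.mem_filter.mp hp).2])
    · exact Finset.sum_congr rfl (fun p hp => by
        simp [hg, (Finset.mem_filter.mp hp).2])
  -- dense part
  have hdensebnd : (∑ _p ∈ (Finset.range P).filter (fun p => dns p = true),
      (2:ℝ)^(2*k₀)) ≤ c * 2^L * 2^(2*k₀) := by
    rw [Finset.sum_const, nsmul_eq_mul]
    exact mul_le_mul_of_nonneg_right hdense (by positivity)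
  -- non-dense part
  set S := (Finset.range P).filter (fun p => ¬ dns p = true) with hS
  have hmaps : ∀ p ∈ S, lvl p ∈ Finset.Icc 1 L := by
    intro p hp
    rw [hS, Finset.mem_filter, Finset.mem_range] at hp
    exact Finset.mem_Icc.mpr ⟨(hlvl p hp.1).1, (hlvl p hp.1).2⟩
  have hfib : ∑ p ∈ S, 2*(R:ℝ)*2^(L+k₀-lvl p)
      = ∑ k ∈ Finset.Icc 1 L, ∑ p ∈ S.filter (fun p => lvl p = k),
          2*(R:ℝ)*2^(L+k₀-lvl p) :=
    (Finset.sum_fiberwise_of_maps_to hmaps _).symm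
  have hnd : ∑ p ∈ S, 2*(R:ℝ)*2^(L+k₀-lvl p) ≤ (L:ℝ) * (2*c*R*2^(L+k₀)) := by
    rw [hfib]
    calc ∑ k ∈ Finset.Icc 1 L, ∑ p ∈ S.filter (fun p => lvl p = k),
          2*(R:ℝ)*2^(L+k₀-lvl p)
        ≤ ∑ k ∈ Finset.Icc 1 L, (2*c*R*2^(L+k₀)) := by
          apply Finset.sum_le_sum
          intro k hk
          rw [Finset.mem_Icc] at hk
          have hcard : ((S.filter (fun p => lvl p = k)).card : ℝ) ≤ c * 2^k := by
            have hEq : S.filter (fun p => lvl p = k)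
                = (Finset.range P).filter (fun p => lvl p = k ∧ dns p = false) := by
              rw [hS, Finset.filter_filter]
              apply Finset.filter_congr
              intro p _
              simp [Bool.not_eq_true, and_comm]
            rw [hEq]; exact hcount k
          calc ∑ p ∈ S.filter (fun p => lvl p = k), 2*(R:ℝ)*2^(L+k₀-lvl p)
              = ∑ p ∈ S.filter (fun p => lvl p = k), 2*(R:ℝ)*2^(L+k₀-k) := by
                apply Finset.sum_congr rfl
                intro p hp
                rw [Finset.mem_filter] at hp
                rw [hp.2]
            _ = ((S.filter (fun p => lvl p = k)).card : ℝ) * (2*(R:ℝ)*2^(L+k₀-k)) := by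
                rw [Finset.sum_const, nsmul_eq_mul]
            _ ≤ (c * 2^k) * (2*(R:ℝ)*2^(L+k₀-k)) :=
                mul_le_mul_of_nonneg_right hcard (by positivity)
            _ = 2*c*R*(2^k * 2^(L+k₀-k)) := by ring
            _ = 2*c*R*2^(L+k₀) := by
                rw [← pow_add]
                have h4 : k + (L + k₀ - k) = L + k₀ := by omega
                rw [h4]
      _ = (L:ℝ) * (2*c*R*2^(L+k₀)) := by
          rw [Finset.sum_const, Nat.card_Icc, nsmul_eq_mul]
          simp
  have htotal : ∑ p ∈ Finset.range P, g p
      ≤ c * 2^L * 2^(2*k₀) + (L:ℝ) * (2*c*R*2^(L+k₀)) := by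
    rw [hsplit]; exact add_le_add hdensebnd hnd
  have hfinal : ∑ p ∈ Finset.range P, min (((M / 2 ^ lvl p : ℕ) : ℝ) ^ 2)
      (2 * (r p : ℝ) * ((M / 2 ^ lvl p : ℕ) : ℝ))
      ≤ c * 2^L * 2^(2*k₀) + (L:ℝ) * (2*c*R*2^(L+k₀)) := le_trans hsum1 htotal
  rw [hlog]
  have hR1 : (1:ℝ) ≤ R := by exact_mod_cast hR
  have hL1 : (1:ℝ) ≤ L := by exact_mod_cast hL
  have hk1 : (1:ℝ) ≤ 2^k₀ := one_le_pow₀ (by norm_num)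
  have hRL : (1:ℝ) ≤ R * L := le_trans (by norm_num) (mul_le_mul hR1 hL1 zero_le_one (by linarith))
  have key : (1 / (2 * (M : ℝ))) * (c * 2^L * 2^(2*k₀) + (L:ℝ) * (2*c*R*2^(L+k₀)))
      ≤ (c + c * 2 ^ k₀) * R * ((L + k₀ : ℕ) : ℝ) := by
    have h2 : (2:ℝ)^(L+k₀) = 2^L * 2^k₀ := by rw [pow_add]
    have h3 : (2:ℝ)^(2*k₀) = 2^k₀ * 2^k₀ := by rw [two_mul, pow_add]
    have heq : (1 / (2 * ((2:ℝ)^L * 2^k₀))) * (c * 2^L * ((2:ℝ)^k₀ * 2^k₀)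
        + (L:ℝ) * (2*c*(R:ℝ)*((2:ℝ)^L * 2^k₀))) = c * 2^k₀ / 2 + c * R * L := by
      have hLpos : ((2:ℝ)^L) ≠ 0 := by positivity
      have hkpos : ((2:ℝ)^k₀) ≠ 0 := by positivity
      field_simp
    rw [hMr, h2, h3, heq]
    push_cast
    nlinarith [mul_nonneg (mul_nonneg hc.le (by positivity : (0:ℝ) ≤ (2:ℝ)^k₀))
        (by linarith : (0:ℝ) ≤ (R:ℝ) * L - 1),
      mul_nonneg (mul_nonneg hc.le (le_trans zero_le_one hR1)) (Nat.cast_nonneg k₀),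
      mul_nonneg (mul_nonneg (mul_nonneg hc.le (by positivity : (0:ℝ) ≤ (2:ℝ)^k₀))
        (le_trans zero_le_one hR1)) (Nat.cast_nonneg k₀)]
  calc (1 / (2 * (M : ℝ))) * ∑ p ∈ Finset.range P,
        min (((M / 2 ^ lvl p : ℕ) : ℝ) ^ 2)
          (2 * (r p : ℝ) * ((M / 2 ^ lvl p : ℕ) : ℝ))
      ≤ (1 / (2 * (M : ℝ))) * (c * 2^L * 2^(2*k₀) + (L:ℝ) * (2*c*R*2^(L+k₀))) := by
        apply mul_le_mul_of_nonneg_left hfinal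
        positivity
    _ ≤ (c + c * 2 ^ k₀) * R * ((L + k₀ : ℕ) : ℝ) := key
end

section
/- For positive reals i ≠ j, the kernel K³_{ij} = (i+j)(i^{1/3}+j^{1/3})^{2/3}/((ij)^{5/9}|i^{2/3}−j^{2/3}|) is bounded above by K̂³_{ij} = (i^{4/3}+i^{2/3}j^{2/3}+j^{4/3})(i^{2/9}+j^{2/9})/(ij)^{5/9}. -/
open Real

lemma real_rpow_add_le_add_rpow {a b : ℝ} (ha : 0 ≤ a) (hb : 0 ≤ b) {p : ℝ}
    (hp : 0 ≤ p) (hp1 : p ≤ 1) : (a + b) ^ p ≤ a ^ p + b ^ p := by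
  have h := NNReal.rpow_add_le_add_rpow a.toNNReal b.toNNReal hp hp1
  have := NNReal.coe_le_coe.2 h
  simpa [NNReal.coe_rpow, Real.coe_toNNReal, ha, hb, Real.coe_toNNReal _ (add_nonneg ha hb)]
    using this

/-- For distinct positive integers `i ≠ j`, the kernel
`K³_{ij} = (i+j)(i^{1/3}+j^{1/3})^{2/3} / ((ij)^{5/9} |i^{2/3} − j^{2/3}|)` is bounded above
by the majorant `K̂³_{ij} = (i^{4/3} + i^{2/3} j^{2/3} + j^{4/3})(i^{2/9}+j^{2/9}) / (ij)^{5/9}`. -/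
theorem kernel3_majorant (i j : ℕ) (hi : 0 < i) (hj : 0 < j) (hij : i ≠ j) :
    ((i : ℝ) + j) * ((i : ℝ) ^ (1/3 : ℝ) + (j : ℝ) ^ (1/3 : ℝ)) ^ (2/3 : ℝ)
        / (((i : ℝ) * j) ^ (5/9 : ℝ) * |(i : ℝ) ^ (2/3 : ℝ) - (j : ℝ) ^ (2/3 : ℝ)|)
      ≤ ((i : ℝ) ^ (4/3 : ℝ) + (i : ℝ) ^ (2/3 : ℝ) * (j : ℝ) ^ (2/3 : ℝ)
            + (j : ℝ) ^ (4/3 : ℝ))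
          * ((i : ℝ) ^ (2/9 : ℝ) + (j : ℝ) ^ (2/9 : ℝ)) / ((i : ℝ) * j) ^ (5/9 : ℝ) := by
  have hi' : (0 : ℝ) < i := by exact_mod_cast hi
  have hj' : (0 : ℝ) < j := by exact_mod_cast hj
  have hijR : (i : ℝ) ≠ j := by exact_mod_cast hij
  set a : ℝ := (i : ℝ) ^ (2/3 : ℝ) with ha
  set b : ℝ := (j : ℝ) ^ (2/3 : ℝ) with hb
  have hane : a ≠ b := by
    intro h
    apply hijR
    have := congrArg (fun x : ℝ => x ^ (3/2 : ℝ)) h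
    simpa [ha, hb, ← Real.rpow_natCast, ← Real.rpow_mul hi'.le, ← Real.rpow_mul hj'.le]
      using this
  have hA : 0 < |a - b| := abs_pos.2 (sub_ne_zero.2 hane)
  have hD : 0 < ((i : ℝ) * j) ^ (5/9 : ℝ) := Real.rpow_pos_of_pos (by positivity) _
  have hsq1 : a ^ 2 = (i : ℝ) ^ (4/3 : ℝ) := by
    rw [ha, ← Real.rpow_natCast ((i : ℝ) ^ (2/3 : ℝ)) 2, ← Real.rpow_mul hi'.le]
    norm_num
  have hsq2 : b ^ 2 = (j : ℝ) ^ (4/3 : ℝ) := by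
    rw [hb, ← Real.rpow_natCast ((j : ℝ) ^ (2/3 : ℝ)) 2, ← Real.rpow_mul hj'.le]
    norm_num
  have hM2 : a ^ 2 + a * b + b ^ 2 = (i : ℝ) ^ (4/3 : ℝ)
      + (i : ℝ) ^ (2/3 : ℝ) * (j : ℝ) ^ (2/3 : ℝ) + (j : ℝ) ^ (4/3 : ℝ) := by
    rw [hsq1, hsq2]
  have hcube : ∀ x : ℝ, 0 ≤ x → (x ^ (2/3 : ℝ)) ^ 3 = x ^ 2 := by
    intro x hx
    rw [← Real.rpow_natCast (x ^ (2/3 : ℝ)) 3, ← Real.rpow_mul hx, ← Real.rpow_natCast x 2]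
    norm_num
  have hkey : |a - b| * ((i : ℝ) ^ (4/3 : ℝ) + (i : ℝ) ^ (2/3 : ℝ) * (j : ℝ) ^ (2/3 : ℝ)
      + (j : ℝ) ^ (4/3 : ℝ)) = |(i : ℝ) - j| * ((i : ℝ) + j) := by
    have h1 : (a - b) * (a ^ 2 + a * b + b ^ 2) = (i : ℝ) ^ 2 - (j : ℝ) ^ 2 := by
      have hi3 := hcube i hi'.le
      have hj3 := hcube j hj'.le
      ring_nf
      nlinarith [hi3, hj3]
    have h2 : |(i : ℝ) ^ 2 - (j : ℝ) ^ 2| = |(i : ℝ) - j| * ((i : ℝ) + j) := by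
      rw [show (i : ℝ) ^ 2 - (j : ℝ) ^ 2 = ((i : ℝ) - j) * ((i : ℝ) + j) by ring, abs_mul,
        abs_of_pos (show (0 : ℝ) < (i : ℝ) + j by positivity)]
    calc |a - b| * ((i : ℝ) ^ (4/3 : ℝ) + (i : ℝ) ^ (2/3 : ℝ) * (j : ℝ) ^ (2/3 : ℝ)
          + (j : ℝ) ^ (4/3 : ℝ))
        = |(a - b) * (a ^ 2 + a * b + b ^ 2)| := by
          rw [abs_mul, abs_of_nonneg (show (0 : ℝ) ≤ a ^ 2 + a * b + b ^ 2 by positivity), hM2]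
      _ = |(i : ℝ) - j| * ((i : ℝ) + j) := by rw [h1, h2]
  have hone : (1 : ℝ) ≤ |(i : ℝ) - j| := by
    rcases lt_or_gt_of_ne hij with h | h
    · have h' : (i : ℝ) + 1 ≤ j := by exact_mod_cast Nat.succ_le_of_lt h
      rw [abs_sub_comm, abs_of_nonneg (by linarith)]; linarith
    · have h' : (j : ℝ) + 1 ≤ i := by exact_mod_cast Nat.succ_le_of_lt h
      rw [abs_of_nonneg (by linarith)]; linarith
  have hsub : ((i : ℝ) ^ (1/3 : ℝ) + (j : ℝ) ^ (1/3 : ℝ)) ^ (2/3 : ℝ)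
      ≤ (i : ℝ) ^ (2/9 : ℝ) + (j : ℝ) ^ (2/9 : ℝ) := by
    have h := real_rpow_add_le_add_rpow (Real.rpow_nonneg hi'.le (1/3))
      (Real.rpow_nonneg hj'.le (1/3)) (p := 2/3) (by norm_num) (by norm_num)
    rwa [← Real.rpow_mul hi'.le, ← Real.rpow_mul hj'.le,
      show (1/3 : ℝ) * (2/3) = 2/9 by norm_num] at h
  have hP : (0 : ℝ) ≤ (i : ℝ) ^ (2/9 : ℝ) + (j : ℝ) ^ (2/9 : ℝ) := by positivity
  rw [div_le_div_iff₀ (by positivity) hD]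
  have hx : ((i : ℝ) ^ (1/3 : ℝ) + (j : ℝ) ^ (1/3 : ℝ)) ^ (2/3 : ℝ)
      ≤ ((i : ℝ) ^ (2/9 : ℝ) + (j : ℝ) ^ (2/9 : ℝ)) * |(i : ℝ) - j| := by
    calc ((i : ℝ) ^ (1/3 : ℝ) + (j : ℝ) ^ (1/3 : ℝ)) ^ (2/3 : ℝ)
        ≤ ((i : ℝ) ^ (2/9 : ℝ) + (j : ℝ) ^ (2/9 : ℝ)) * 1 := by rw [mul_one]; exact hsub
      _ ≤ ((i : ℝ) ^ (2/9 : ℝ) + (j : ℝ) ^ (2/9 : ℝ)) * |(i : ℝ) - j| :=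
          mul_le_mul_of_nonneg_left hone hP
  have goal' : ((i : ℝ) + j) * ((i : ℝ) ^ (1/3 : ℝ) + (j : ℝ) ^ (1/3 : ℝ)) ^ (2/3 : ℝ)
      ≤ ((i : ℝ) ^ (4/3 : ℝ) + (i : ℝ) ^ (2/3 : ℝ) * (j : ℝ) ^ (2/3 : ℝ)
          + (j : ℝ) ^ (4/3 : ℝ)) * ((i : ℝ) ^ (2/9 : ℝ) + (j : ℝ) ^ (2/9 : ℝ)) * |a - b| := by
    calc ((i : ℝ) + j) * ((i : ℝ) ^ (1/3 : ℝ) + (j : ℝ) ^ (1/3 : ℝ)) ^ (2/3 : ℝ)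
        ≤ ((i : ℝ) + j) * (((i : ℝ) ^ (2/9 : ℝ) + (j : ℝ) ^ (2/9 : ℝ)) * |(i : ℝ) - j|) :=
          mul_le_mul_of_nonneg_left hx (by positivity)
      _ = ((i : ℝ) ^ (2/9 : ℝ) + (j : ℝ) ^ (2/9 : ℝ)) * (|(i : ℝ) - j| * ((i : ℝ) + j)) := by
          ring
      _ = ((i : ℝ) ^ (2/9 : ℝ) + (j : ℝ) ^ (2/9 : ℝ)) * (|a - b|
            * ((i : ℝ) ^ (4/3 : ℝ) + (i : ℝ) ^ (2/3 : ℝ) * (j : ℝ) ^ (2/3 : ℝ)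
              + (j : ℝ) ^ (4/3 : ℝ))) := by rw [hkey]
      _ = ((i : ℝ) ^ (4/3 : ℝ) + (i : ℝ) ^ (2/3 : ℝ) * (j : ℝ) ^ (2/3 : ℝ)
            + (j : ℝ) ^ (4/3 : ℝ)) * ((i : ℝ) ^ (2/9 : ℝ) + (j : ℝ) ^ (2/9 : ℝ)) * |a - b| := by
          ring
  calc ((i : ℝ) + j) * ((i : ℝ) ^ (1/3 : ℝ) + (j : ℝ) ^ (1/3 : ℝ)) ^ (2/3 : ℝ)
        * ((i : ℝ) * j) ^ (5/9 : ℝ)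
      ≤ (((i : ℝ) ^ (4/3 : ℝ) + (i : ℝ) ^ (2/3 : ℝ) * (j : ℝ) ^ (2/3 : ℝ)
          + (j : ℝ) ^ (4/3 : ℝ)) * ((i : ℝ) ^ (2/9 : ℝ) + (j : ℝ) ^ (2/9 : ℝ)) * |a - b|)
          * ((i : ℝ) * j) ^ (5/9 : ℝ) := by gcongr
    _ = ((i : ℝ) ^ (4/3 : ℝ) + (i : ℝ) ^ (2/3 : ℝ) * (j : ℝ) ^ (2/3 : ℝ)
          + (j : ℝ) ^ (4/3 : ℝ)) * ((i : ℝ) ^ (2/9 : ℝ) + (j : ℝ) ^ (2/9 : ℝ))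
          * (((i : ℝ) * j) ^ (5/9 : ℝ) * |a - b|) := by ring
end
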